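/- arXiv:1107.5647 — 5 statements merged into one kernel-verified Lean document; each statement's English description precedes it below -/
import Mathlib

section
/- Let f : [a, ∞) → ℝ be continuous and nonnegative, and let α > 0. Then the condition that (1/(α+1))·f(t) ≥ (1/(t-a))·∫_a^t f(x) dx holds for all t sufficiently large is equivalent to the condition that the ratio ((1/(t-a))·∫_a^t f(x) dx) / (t-a)^α is nondecreasing for t larger than some A ≥ a. -/
/-!
Write `F t = ∫ x in a..t, f x`. For `t > a` the ratio `F t / (t - a) ^ (α + 1)` has derivative
`(f t * (t - a) - (α + 1) * F t) * (t - a) ^ (-(α + 2))`, whose sign is that of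
`f t / (α + 1) - F t / (t - a)`. Both conditions therefore say that this derivative is eventually
nonnegative, and on an open interval a differentiable function is monotone exactly when its
derivative is nonnegative.
-/

open Set Filter MeasureTheory intervalIntegral

theorem monotoneOn_iff_hasDerivAt_nonneg {s : Set ℝ} (hs : IsOpen s) (hconv : Convex ℝ s)
    {g g' : ℝ → ℝ} (hg : ∀ t ∈ s, HasDerivAt g (g' t) t) :
    MonotoneOn g s ↔ ∀ t ∈ s, 0 ≤ g' t := by
  refine ⟨fun hmono t ht => ?_, fun hnonneg => ?_⟩
  · rw [← (hg t ht).deriv, ← derivWithin_of_isOpen hs ht]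
    exact hmono.derivWithin_nonneg
  · refine monotoneOn_of_hasDerivWithinAt_nonneg hconv
      (fun t ht => (hg t ht).continuousAt.continuousWithinAt) (fun t ht => ?_)
      (fun t ht => hnonneg t (interior_subset ht))
    exact (hg t (interior_subset ht)).hasDerivWithinAt

theorem hasDerivAt_integral_of_continuousOn_Ici {a t : ℝ} {f : ℝ → ℝ}
    (hf : ContinuousOn f (Ici a)) (ht : a < t) :
    HasDerivAt (fun u => ∫ x in a..u, f x) (f t) t := by
  have hint : IntervalIntegrable f volume a t :=
    (hf.mono (by rw [uIcc_of_le ht.le]; exact Icc_subset_Ici_self)).intervalIntegrable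
  exact integral_hasDerivAt_right hint
    ((hf.mono Ioi_subset_Ici_self).stronglyMeasurableAtFilter isOpen_Ioi t ht)
    (hf.continuousAt (Ici_mem_nhds ht))

theorem hasDerivAt_mean_div_rpow {a α t F' : ℝ} {F : ℝ → ℝ} (hF : HasDerivAt F F' t)
    (ht : a < t) :
    HasDerivAt (fun s => ((1 / (s - a)) * F s) / (s - a) ^ α)
      ((F' * (t - a) - (α + 1) * F t) * (t - a) ^ (-(α + 2))) t := by
  have hta : 0 < t - a := sub_pos.2 ht
  have hpow : HasDerivAt (fun s : ℝ => (s - a) ^ (-(α + 1)))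
      (-(α + 1) * (t - a) ^ (-(α + 1) - 1)) t := by
    simpa using ((hasDerivAt_id t).sub_const a).rpow_const (p := -(α + 1)) (Or.inl hta.ne')
  have hprod : HasDerivAt (fun s => F s * (s - a) ^ (-(α + 1)))
      (F' * (t - a) ^ (-(α + 1)) + F t * (-(α + 1) * (t - a) ^ (-(α + 1) - 1))) t :=
    hF.mul hpow
  have heq : (fun s => ((1 / (s - a)) * F s) / (s - a) ^ α) =ᶠ[nhds t]
      fun s => F s * (s - a) ^ (-(α + 1)) := by
    filter_upwards [Ioi_mem_nhds ht] with s hs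
    have hsa : 0 < s - a := sub_pos.2 hs
    have : (s - a) ^ α ≠ 0 := (Real.rpow_pos_of_pos hsa α).ne'
    rw [Real.rpow_neg hsa.le, Real.rpow_add hsa, Real.rpow_one]
    field_simp
  refine (hprod.congr_of_eventuallyEq heq).congr_deriv ?_
  rw [show -(α + 1) - 1 = -(α + 2) by ring, show -(α + 1) = 1 + -(α + 2) by ring,
    Real.rpow_add hta, Real.rpow_one]
  ring

theorem mul_rpow_nonneg_iff_mean_le {a α t y I : ℝ} (hα : 0 < α + 1) (ht : a < t) :
    0 ≤ (y * (t - a) - (α + 1) * I) * (t - a) ^ (-(α + 2)) ↔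
      (1 / (α + 1)) * y ≥ (1 / (t - a)) * I := by
  have hta : 0 < t - a := sub_pos.2 ht
  rw [mul_nonneg_iff_of_pos_right (Real.rpow_pos_of_pos hta _), ge_iff_le, one_div, one_div,
    inv_mul_eq_div, inv_mul_eq_div, div_le_div_iff₀ hta hα, sub_nonneg]
  constructor <;> intro h <;> linarith

theorem gc_alpha_iff_ratio_monotone_general (a α : ℝ) (hα : 0 < α) (f : ℝ → ℝ)
    (hf : ContinuousOn f (Set.Ici a)) :
    (∀ᶠ t in Filter.atTop, (1 / (α + 1)) * f t ≥ (1 / (t - a)) * ∫ x in a..t, f x) ↔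
    (∃ A ≥ a, MonotoneOn
      (fun t => ((1 / (t - a)) * ∫ x in a..t, f x) / (t - a) ^ α) (Set.Ioi A)) := by
  have hα1 : 0 < α + 1 := by linarith
  have hderiv : ∀ A ≥ a, ∀ t ∈ Ioi A, HasDerivAt
      (fun t => ((1 / (t - a)) * ∫ x in a..t, f x) / (t - a) ^ α)
      ((f t * (t - a) - (α + 1) * ∫ x in a..t, f x) * (t - a) ^ (-(α + 2))) t :=
    fun A hA t ht => hasDerivAt_mean_div_rpow
      (hasDerivAt_integral_of_continuousOn_Ici hf (hA.trans_lt ht)) (hA.trans_lt ht)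
  constructor
  · intro h
    obtain ⟨T, hT⟩ := eventually_atTop.1 h
    refine ⟨max a T, le_max_left _ _, ?_⟩
    rw [monotoneOn_iff_hasDerivAt_nonneg isOpen_Ioi (convex_Ioi _) (hderiv _ (le_max_left _ _))]
    intro t ht
    rw [mul_rpow_nonneg_iff_mean_le hα1 ((le_max_left a T).trans_lt ht)]
    exact hT t ((le_max_right a T).trans ht.le)
  · rintro ⟨A, hAa, hmono⟩
    rw [monotoneOn_iff_hasDerivAt_nonneg isOpen_Ioi (convex_Ioi _) (hderiv A hAa)] at hmono
    filter_upwards [eventually_gt_atTop A] with t ht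
    exact (mul_rpow_nonneg_iff_mean_le hα1 (hAa.trans_lt ht)).1 (hmono t ht)

theorem gc_alpha_iff_ratio_monotone (a α : ℝ) (hα : 0 < α) (f : ℝ → ℝ)
    (hf : ContinuousOn f (Set.Ici a)) (hf0 : ∀ x ∈ Set.Ici a, 0 ≤ f x) :
    (∀ᶠ t in Filter.atTop, (1 / (α + 1)) * f t ≥ (1 / (t - a)) * ∫ x in a..t, f x) ↔
    (∃ A ≥ a, MonotoneOn
      (fun t => ((1 / (t - a)) * ∫ x in a..t, f x) / (t - a) ^ α) (Set.Ioi A)) :=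
  gc_alpha_iff_ratio_monotone_general a α hα f hf
end

section
/- Let g ∈ C¹([a, ∞)) be nondecreasing and nonnegative, and let α > 0. Then the function f(x) = g(x)·(x-a)^α satisfies (1/(t-a))·∫_a^t f(x) dx ≤ (1/(α+1))·f(t) for all t > a; in particular f belongs to the class GC_α. -/
open Set Filter MeasureTheory intervalIntegral

/- Since `g` is nondecreasing, `g x ≤ g t` on `[a, t]`, so the mean of `g x (x - a)^α` over `[a, t]`
is at most `g t` times the mean of `(x - a)^α`, which is `(t - a)^α / (α + 1)`. -/

theorem integral_sub_rpow_eq {a t r : ℝ} (hr : -1 < r) :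
    ∫ x in a..t, (x - a) ^ r = (t - a) ^ (r + 1) / (r + 1) := by
  rw [integral_comp_sub_right (fun u => u ^ r), sub_self, integral_rpow (Or.inl hr),
    Real.zero_rpow (by linarith), sub_zero]

theorem MonotoneOn.integral_mul_le {g w : ℝ → ℝ} {a t : ℝ} (hat : a ≤ t)
    (hg : MonotoneOn g (Icc a t)) (hw : ContinuousOn w (Icc a t))
    (hw_nonneg : ∀ x ∈ Icc a t, 0 ≤ w x) :
    ∫ x in a..t, g x * w x ≤ g t * ∫ x in a..t, w x := by
  have hIcc : uIcc a t = Icc a t := uIcc_of_le hat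
  rw [← intervalIntegral.integral_const_mul]
  refine integral_mono_on hat
    ((hIcc ▸ hg).intervalIntegrable.mul_continuousOn (hIcc ▸ hw))
    ((hIcc ▸ hw).intervalIntegrable.const_mul _) fun x hx => ?_
  exact mul_le_mul_of_nonneg_right (hg hx ⟨hat, le_rfl⟩ hx.2) (hw_nonneg x hx)

theorem monotone_times_power_mem_GC_general (a α : ℝ) (hα : 0 < α) (g : ℝ → ℝ)
    (hgmono : MonotoneOn g (Set.Ici a)) :
    ∀ t > a, (1 / (t - a)) * (∫ x in a..t, g x * (x - a) ^ α)
      ≤ (1 / (α + 1)) * (g t * (t - a) ^ α) := by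
  intro t ht
  have hta : 0 < t - a := sub_pos.2 ht
  have hweight : ∫ x in a..t, (x - a) ^ α = (t - a) ^ α * (t - a) / (α + 1) := by
    rw [integral_sub_rpow_eq (by linarith), Real.rpow_add_one hta.ne']
  have hmean : ∫ x in a..t, g x * (x - a) ^ α ≤ g t * ∫ x in a..t, (x - a) ^ α :=
    (hgmono.mono Icc_subset_Ici_self).integral_mul_le ht.le
      ((continuous_sub_right a).continuousOn.rpow_const fun _ _ => Or.inr hα.le)
      fun x hx => Real.rpow_nonneg (sub_nonneg.2 hx.1) α
  calc (1 / (t - a)) * (∫ x in a..t, g x * (x - a) ^ α)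
      ≤ (1 / (t - a)) * (g t * ∫ x in a..t, (x - a) ^ α) := by gcongr
    _ = (1 / (α + 1)) * (g t * (t - a) ^ α) := by
      rw [hweight]
      field_simp

theorem monotone_times_power_mem_GC (a α : ℝ) (hα : 0 < α) (g : ℝ → ℝ)
    (hg : ContDiffOn ℝ 1 g (Set.Ici a)) (hgmono : MonotoneOn g (Set.Ici a))
    (hgnn : ∀ x ∈ Set.Ici a, 0 ≤ g x) :
    ∀ t > a, (1 / (t - a)) * (∫ x in a..t, g x * (x - a) ^ α)
      ≤ (1 / (α + 1)) * (g t * (t - a) ^ α) :=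
  monotone_times_power_mem_GC_general a α hα g hgmono
end

section
/- The function f(x) = (x + sin x)·x on [0, ∞) belongs to the class GC₁ but is not convex on [0, ∞). -/
open Set Filter MeasureTheory intervalIntegral

open Real

/-! Since `∫₀ᵗ (x + sin x) x dx = t³/3 + sin t - t cos t`, its mean `t²/3 + O(1)` is
eventually below `f(t)/2 = t²/2 + O(t)`. At a point `m ≥ 4` where `sin m = 1` we have
`sin (m ± 1) = cos 1`, so the midpoint inequality for `f` at `m ± 1` reads `m (1 - cos 1) ≤ 1`,
which fails since `cos 1 ≤ 2/3`. -/

lemma integral_add_sin_mul_self (t : ℝ) :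
    ∫ x in (0:ℝ)..t, (x + sin x) * x = t ^ 3 / 3 + sin t - t * cos t := by
  have hderiv : ∀ x : ℝ,
      HasDerivAt (fun y => y ^ 3 / 3 + sin y - y * cos y) ((x + sin x) * x) x := by
    intro x
    refine ((((hasDerivAt_pow 3 x).div_const 3).add (hasDerivAt_sin x)).sub
      ((hasDerivAt_id' x).mul (hasDerivAt_cos x))).congr_deriv ?_
    push_cast
    ring
  rw [integral_eq_sub_of_hasDerivAt (fun x _ => hderiv x)
    (Continuous.intervalIntegrable (by fun_prop) _ _)]
  simp

lemma inv_mul_integral_add_sin_mul_self_le {t : ℝ} (ht : 5 ≤ t) :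
    (1 / t) * ∫ x in (0:ℝ)..t, (x + sin x) * x ≤ (1 / 2) * ((t + sin t) * t) := by
  have ht0 : 0 < t := by linarith
  rw [integral_add_sin_mul_self, one_div, inv_mul_le_iff₀ ht0]
  nlinarith [neg_one_le_sin t, sin_le_one t, neg_one_le_cos t, cos_le_one t, mul_pos ht0 ht0]

lemma sin_add_eq_cos_of_sin_eq_one {m : ℝ} (hm : sin m = 1) (x : ℝ) :
    sin (m + x) = cos x := by
  have hcos : cos m = 0 := by nlinarith [sin_sq_add_cos_sq m]
  simp [sin_add, hm, hcos]

lemma average_add_sin_mul_self_lt_of_sin_eq_one {m : ℝ} (hsin : sin m = 1) (hm : 4 ≤ m) :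
    (1 / 2) * ((m - 1 + sin (m - 1)) * (m - 1)) + (1 / 2) * ((m + 1 + sin (m + 1)) * (m + 1))
      < (m + sin m) * m := by
  rw [sub_eq_add_neg, sin_add_eq_cos_of_sin_eq_one hsin, sin_add_eq_cos_of_sin_eq_one hsin,
    cos_neg, hsin, ← sub_eq_add_neg]
  nlinarith [cos_one_le]

theorem x_plus_sin_x_times_x_GC_one_not_convex :
    (∀ᶠ t in Filter.atTop,
      (1 / 2) * ((t + Real.sin t) * t) ≥ (1 / t) * ∫ x in (0:ℝ)..t, (x + Real.sin x) * x) ∧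
    ¬ ConvexOn ℝ (Set.Ici (0:ℝ)) (fun x => (x + Real.sin x) * x) := by
  refine ⟨?_, fun hconv => ?_⟩
  · filter_upwards [eventually_ge_atTop 5] with t ht using inv_mul_integral_add_sin_mul_self_le ht
  · set m := π / 2 + 2 * π
    have hsin : sin m = 1 := by simp [m, sin_add_two_pi]
    have hm : 4 ≤ m := by simp only [m]; linarith [pi_gt_three]
    have hmid := hconv.2 (show m - 1 ∈ Ici 0 by simp only [mem_Ici]; linarith)
      (show m + 1 ∈ Ici 0 by simp only [mem_Ici]; linarith)
      (show (0 : ℝ) ≤ 1 / 2 by norm_num) (show (0 : ℝ) ≤ 1 / 2 by norm_num) (by norm_num)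
    rw [show (1 / 2 : ℝ) • (m - 1) + (1 / 2 : ℝ) • (m + 1) = m by simp only [smul_eq_mul]; ring]
      at hmid
    exact (average_add_sin_mul_self_lt_of_sin_eq_one hsin hm).not_ge hmid
end

section
/- Let f ∈ C([0, ∞)) be nonnegative and nondecreasing with f(0) = 0 and f(t) > 0 for t > 0 and satisfying the generalized Keller-Osserman condition of order p > 1, i.e., ∫_1^∞ (F(t))^{-1/p} dt < ∞ where F(x) = ∫_0^x f(s) ds and F is nondecreasing. Then lim_{t→∞} F(t)/t^p = ∞. -/
/-!
Since `F` is nondecreasing, `F ^ (-1/p)` is nonincreasing, so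
`(t/2) · F(t) ^ (-1/p) ≤ ∫_{t/2}^{t} F ^ (-1/p)`. The right side is a difference of partial
integrals of a convergent integral, hence tends to `0`; so `t · F(t) ^ (-1/p) → 0⁺`, and raising
to the power `-p` gives `F(t) / t ^ p → ∞`.
-/

open Set Filter MeasureTheory intervalIntegral Topology

theorem tendsto_integral_half_self_zero {g : ℝ → ℝ} {a : ℝ} (hg : IntegrableOn g (Ioi a)) :
    Tendsto (fun t => ∫ x in t / 2..t, g x) atTop (𝓝 0) := by
  have h_half : Tendsto (fun t : ℝ => t / 2) atTop atTop := tendsto_id.atTop_div_const two_pos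
  have h_sub := (intervalIntegral_tendsto_integral_Ioi a hg tendsto_id).sub
    (intervalIntegral_tendsto_integral_Ioi a hg h_half)
  rw [sub_self] at h_sub
  refine h_sub.congr' ?_
  filter_upwards [eventually_ge_atTop (2 * a), eventually_ge_atTop a] with t h2t ht
  have hint : ∀ b, a ≤ b → IntervalIntegrable g volume a b := fun b hb =>
    (intervalIntegrable_iff_integrableOn_Ioc_of_le hb).2 (hg.mono_set Ioc_subset_Ioi_self)
  exact integral_interval_sub_left (hint t ht) (hint _ (by linarith))

theorem AntitoneOn.mul_le_integral {g : ℝ → ℝ} {b c : ℝ} (hg : AntitoneOn g (Icc b c))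
    (hbc : b ≤ c) : (c - b) * g c ≤ ∫ x in b..c, g x := by
  rw [← smul_eq_mul, ← intervalIntegral.integral_const]
  refine integral_mono_on hbc intervalIntegrable_const ?_ fun x hx =>
    hg hx (right_mem_Icc.2 hbc) hx.2
  rw [← uIcc_of_le hbc] at hg
  exact hg.intervalIntegrable

theorem monotoneOn_integral_of_nonneg {f : ℝ → ℝ} {a : ℝ} (hf : ContinuousOn f (Ici a))
    (hfnn : ∀ x ∈ Ici a, 0 ≤ f x) : MonotoneOn (fun t => ∫ s in a..t, f s) (Ici a) := by
  intro x hx y hy hxy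
  have hint : ∀ b ∈ Ici a, IntervalIntegrable f volume a b := fun b hb =>
    (hf.mono Icc_subset_Ici_self).intervalIntegrable_of_Icc hb
  rw [← sub_nonneg, integral_interval_sub_left (hint y hy) (hint x hx)]
  exact integral_nonneg hxy fun s hs => hfnn s (hx.trans hs.1)

theorem tendsto_div_rpow_atTop_of_integrableOn_rpow_neg {G : ℝ → ℝ} {a p : ℝ} (hp : 0 < p)
    (hG : MonotoneOn G (Ici a)) (hGpos : ∀ x ∈ Ici a, 0 < G x)
    (hKO : IntegrableOn (fun t => G t ^ (-1 / p)) (Ici a)) :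
    Tendsto (fun t => G t / t ^ p) atTop atTop := by
  have hanti : ∀ b ≥ a, ∀ c, AntitoneOn (fun t => G t ^ (-1 / p)) (Icc b c) :=
    fun b hb c x hx y hy hxy =>
      Real.rpow_le_rpow_of_nonpos (hGpos x (hb.trans hx.1))
        (hG (hb.trans hx.1) (hb.trans hy.1) hxy) (by rw [neg_div]; exact neg_nonpos.2 (by positivity))
  have hsmall : Tendsto (fun t => t / 2 * G t ^ (-1 / p)) atTop (𝓝 0) := by
    refine tendsto_of_tendsto_of_tendsto_of_le_of_le' tendsto_const_nhds
      (tendsto_integral_half_self_zero (hKO.mono_set Ioi_subset_Ici_self)) ?_ ?_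
    · filter_upwards [eventually_ge_atTop 0, eventually_ge_atTop a] with t ht₀ ht
      have := hGpos t ht
      positivity
    · filter_upwards [eventually_ge_atTop 0, eventually_ge_atTop (2 * a)] with t ht₀ ht
      have hle := (hanti (t / 2) (by linarith) t).mul_le_integral (by linarith)
      rwa [sub_half] at hle
  have hzero : Tendsto (fun t => t * G t ^ (-1 / p)) atTop (𝓝[>] 0) := by
    refine tendsto_nhdsWithin_iff.2 ⟨?_, ?_⟩
    · simpa only [mul_zero] using (hsmall.const_mul 2).congr fun t => by ring
    · filter_upwards [eventually_gt_atTop 0, eventually_ge_atTop a] with t ht₀ ht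
      exact mul_pos ht₀ (Real.rpow_pos_of_pos (hGpos t ht) _)
  refine ((tendsto_rpow_neg_nhdsGT_zero (neg_lt_zero.2 hp)).comp hzero).congr' ?_
  filter_upwards [eventually_gt_atTop 0, eventually_ge_atTop a] with t ht₀ ht
  have hGt := hGpos t ht
  rw [Function.comp_apply, Real.mul_rpow ht₀.le (Real.rpow_nonneg hGt.le _),
    ← Real.rpow_mul hGt.le, show -1 / p * -p = 1 by field_simp, Real.rpow_one,
    Real.rpow_neg ht₀.le, inv_mul_eq_div]

theorem keller_osserman_growth_general (p : ℝ) (hp : 1 < p) (f : ℝ → ℝ)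
    (hf : ContinuousOn f (Set.Ici 0)) (hfnn : ∀ x ∈ Set.Ici (0:ℝ), 0 ≤ f x)
    (hfpos : ∀ t > (0:ℝ), 0 < f t)
    (hKO : MeasureTheory.IntegrableOn
      (fun t => (∫ s in (0:ℝ)..t, f s) ^ (-1 / p)) (Set.Ici 1)) :
    Filter.Tendsto (fun t => (∫ s in (0:ℝ)..t, f s) / t ^ p) Filter.atTop Filter.atTop := by
  have hFpos : ∀ t ∈ Ici (1 : ℝ), 0 < ∫ s in (0:ℝ)..t, f s := fun t ht =>
    intervalIntegral_pos_of_pos_on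
      ((hf.mono Icc_subset_Ici_self).intervalIntegrable_of_Icc (zero_le_one.trans ht))
      (fun s hs => hfpos s hs.1) (zero_lt_one.trans_le ht)
  exact tendsto_div_rpow_atTop_of_integrableOn_rpow_neg (zero_lt_one.trans hp)
    ((monotoneOn_integral_of_nonneg hf hfnn).mono (Ici_subset_Ici.2 zero_le_one)) hFpos hKO

theorem keller_osserman_growth (p : ℝ) (hp : 1 < p) (f : ℝ → ℝ)
    (hf : ContinuousOn f (Set.Ici 0)) (hfnn : ∀ x ∈ Set.Ici (0:ℝ), 0 ≤ f x)
    (hfmono : MonotoneOn f (Set.Ici 0)) (hf0 : f 0 = 0)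
    (hfpos : ∀ t > (0:ℝ), 0 < f t)
    (hKO : MeasureTheory.IntegrableOn
      (fun t => (∫ s in (0:ℝ)..t, f s) ^ (-1 / p)) (Set.Ici 1)) :
    Filter.Tendsto (fun t => (∫ s in (0:ℝ)..t, f s) / t ^ p) Filter.atTop Filter.atTop :=
  keller_osserman_growth_general p hp f hf hfnn hfpos hKO
end

section
/- Let C > 0 and let H ∈ C²([0, ∞)) be positive with H' nondecreasing, H'(t) − H'(0) ≥ 0, H'(t) → ∞ as t → ∞, and suppose (1/(2C))·(H'(t) − H'(0))² ≤ H(t)·H''(t) for all t ≥ 0. If moreover there exist β ∈ (0, 1/C) and q > 0 with 2(q+1) < β such that β·H'(t)² ≤ 2·H(t)·H''(t) for all t ≥ T₀ and H(t) → ∞, then the function G(t) = H(t)^{-q} is concave on [T₀, ∞) and tends to 0 at infinity, which is impossible for a strictly positive function; hence no such H exists. -/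
/-!
Since `2(q + 1) < β`, the hypothesis `β H'² ≤ 2 H H''` gives `(q + 1) H'² ≤ H H''`, which is
exactly the sign condition making `G = H^(-q)` concave, as
`G'' = q H^(-q-2) ((q + 1) H'² - H H'')`. A concave function on a half-line that is bounded
below is nondecreasing (a strict decrease would continue at least linearly, by monotonicity of
slopes), so the positive function `G` stays above `G(T₀) > 0` and cannot tend to `0`; but it
does, because `H → ∞`.
-/

open Set Filter

theorem ConcaveOn.monotoneOn_Ici_of_bddBelow {f : ℝ → ℝ} {a : ℝ}
    (hf : ConcaveOn ℝ (Ici a) f) (hbdd : BddBelow (f '' Ici a)) : MonotoneOn f (Ici a) := by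
  obtain ⟨c, hc⟩ := hbdd
  intro x hx y hy hxy
  by_contra! hdec
  have hxy : x < y := hxy.lt_of_ne (by rintro rfl; exact hdec.false)
  set m := (f y - f x) / (y - x)
  have hm : m < 0 := div_neg_of_neg_of_pos (by linarith) (by linarith)
  have hcy : c ≤ f y := hc (mem_image_of_mem f hy)
  set z := y + (c - f y) / m + 1
  have hyz : y < z := by
    have : 0 ≤ (c - f y) / m := div_nonneg_of_nonpos (by linarith) hm.le
    linarith
  have hz : z ∈ Ici a := le_trans (mem_Ici.mp hy) hyz.le
  have hslope : (f z - f y) / (z - y) ≤ m := hf.slope_anti_adjacent hx hz hxy hyz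
  have hfz : f z ≤ c + m := by
    rw [div_le_iff₀ (by linarith)] at hslope
    have : m * (z - y) = c - f y + m := by
      rw [show z - y = (c - f y) / m + 1 by ring, mul_add, mul_div_cancel₀ _ hm.ne, mul_one]
    linarith
  linarith [hc (mem_image_of_mem f hz)]

theorem concaveOn_rpow_neg {H : ℝ → ℝ} {s : Set ℝ} {q : ℝ} (hs : Convex ℝ s) (hq : 0 ≤ q)
    (hH : Differentiable ℝ H) (hH' : Differentiable ℝ (deriv H)) (hpos : ∀ t ∈ s, 0 < H t)
    (hdiff : ∀ t ∈ interior s, (q + 1) * deriv H t ^ 2 ≤ H t * deriv (deriv H) t) :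
    ConcaveOn ℝ s (fun t => H t ^ (-q)) := by
  have hG' : ∀ t ∈ s, HasDerivAt (fun t => H t ^ (-q)) (deriv H t * (-q) * H t ^ (-q - 1)) t :=
    fun t ht => (hH t).hasDerivAt.rpow_const (Or.inl (hpos t ht).ne')
  have hG'' : ∀ t ∈ s, HasDerivAt (fun t => deriv H t * (-q) * H t ^ (-q - 1))
      (deriv (deriv H) t * (-q) * H t ^ (-q - 1) +
        deriv H t * (-q) * (deriv H t * (-q - 1) * H t ^ (-q - 1 - 1))) t :=
    fun t ht => ((hH' t).hasDerivAt.mul_const (-q)).mul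
      ((hH t).hasDerivAt.rpow_const (Or.inl (hpos t ht).ne'))
  refine concaveOn_of_hasDerivWithinAt2_nonpos hs
    (fun t ht => (hG' t ht).continuousAt.continuousWithinAt)
    (fun t ht => (hG' t (interior_subset ht)).hasDerivWithinAt)
    (fun t ht => (hG'' t (interior_subset ht)).hasDerivWithinAt) fun t ht => ?_
  have hHt := hpos t (interior_subset ht)
  have hsplit : H t ^ (-q - 1) = H t ^ (-q - 1 - 1) * H t := by
    rw [← Real.rpow_add_one hHt.ne']
    ring_nf
  have hfactor : 0 ≤ q * H t ^ (-q - 1 - 1) := mul_nonneg hq (Real.rpow_nonneg hHt.le _)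
  rw [hsplit]
  nlinarith [mul_le_mul_of_nonneg_left (hdiff t ht) hfactor]

theorem blow_up_concavity_argument_general (β q T₀ : ℝ) (hq : 0 < q) (hqβ : 2 * (q + 1) < β)
    (hT₀ : 0 ≤ T₀) (H : ℝ → ℝ) (hH : ContDiff ℝ 2 H)
    (hHpos : ∀ t ≥ (0:ℝ), 0 < H t)
    (hHinf : Filter.Tendsto H Filter.atTop Filter.atTop)
    (hβineq : ∀ t ≥ T₀, β * (deriv H t) ^ 2 ≤ 2 * H t * deriv (deriv H) t) :
    ConcaveOn ℝ (Set.Ici T₀) (fun t => (H t) ^ (-q)) ∧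
    Filter.Tendsto (fun t => (H t) ^ (-q)) Filter.atTop (nhds 0) ∧
    False := by
  have hpos : ∀ t ∈ Ici T₀, 0 < H t := fun t ht => hHpos t (hT₀.trans ht)
  have hH' : Differentiable ℝ (deriv H) :=
    ((contDiff_succ_iff_deriv (n := 1)).mp hH).2.2.differentiable one_ne_zero
  have hconc : ConcaveOn ℝ (Ici T₀) (fun t => H t ^ (-q)) :=
    concaveOn_rpow_neg (convex_Ici T₀) hq.le (hH.differentiable two_ne_zero) hH' hpos
      fun t ht => by
        have := hβineq t (interior_subset ht)
        nlinarith [sq_nonneg (deriv H t)]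
  have hlim : Tendsto (fun t => H t ^ (-q)) atTop (nhds 0) :=
    (tendsto_rpow_neg_atTop hq).comp hHinf
  refine ⟨hconc, hlim, ?_⟩
  have hGpos : ∀ t ∈ Ici T₀, 0 < H t ^ (-q) := fun t ht => Real.rpow_pos_of_pos (hpos t ht) _
  have hmono := hconc.monotoneOn_Ici_of_bddBelow ⟨0, by
    rintro _ ⟨t, ht, rfl⟩
    exact (hGpos t ht).le⟩
  have : H T₀ ^ (-q) ≤ 0 := ge_of_tendsto hlim <|
    (eventually_ge_atTop T₀).mono fun t ht => hmono self_mem_Ici ht ht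
  linarith [hGpos T₀ self_mem_Ici]

theorem blow_up_concavity_argument (C β q T₀ : ℝ) (hC : 0 < C)
    (hβ : β ∈ Set.Ioo 0 (1 / C)) (hq : 0 < q) (hqβ : 2 * (q + 1) < β)
    (hT₀ : 0 ≤ T₀) (H : ℝ → ℝ) (hH : ContDiff ℝ 2 H)
    (hHpos : ∀ t ≥ (0:ℝ), 0 < H t)
    (hH'mono : MonotoneOn (deriv H) (Set.Ici 0))
    (hH'0 : ∀ t ≥ (0:ℝ), deriv H 0 ≤ deriv H t)
    (hH'inf : Filter.Tendsto (deriv H) Filter.atTop Filter.atTop)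
    (hHinf : Filter.Tendsto H Filter.atTop Filter.atTop)
    (hineq : ∀ t ≥ (0:ℝ),
      (1 / (2 * C)) * (deriv H t - deriv H 0) ^ 2 ≤ H t * deriv (deriv H) t)
    (hβineq : ∀ t ≥ T₀, β * (deriv H t) ^ 2 ≤ 2 * H t * deriv (deriv H) t) :
    ConcaveOn ℝ (Set.Ici T₀) (fun t => (H t) ^ (-q)) ∧
    Filter.Tendsto (fun t => (H t) ^ (-q)) Filter.atTop (nhds 0) ∧
    False :=
  blow_up_concavity_argument_general β q T₀ hq hqβ hT₀ H hH hHpos hHinf hβineq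
end
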